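/- Let h_1,…,h_N be Hermitian d×d complex matrices with H = ∑_{j=1}^N h_j. Then for every real Δ, ‖∏_{j=1}^N exp(−i h_j Δ) − exp(−iHΔ)‖ ≤ (Δ²/2) · ∑_{1 ≤ j < k ≤ N} ‖[h_j, h_k]‖, where [h_j,h_k] = h_j h_k − h_k h_j and ‖·‖ is the operator norm. -/

import Mathlib

/-!
For skew-adjoint `a`, `b` in a C⋆-algebra put `F u = exp (-u (a + b)) exp (u a) exp (u b)`.
Then `F' u = exp (-u (a + b)) [exp (u a), b] exp (u b)`, and since conjugating `b` by the unitary
`exp (u a)` moves it at speed at most `‖[a, b]‖`, we get `‖F' u‖ ≤ |u| ‖[a, b]‖`; integrating gives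
the two-factor bound `(t² / 2) ‖[a, b]‖`. The `N`-factor bound follows by splitting off the first
factor, because multiplication by unitaries is isometric and
`‖[a₁, ∑_{k > 1} a_k]‖ ≤ ∑_{k > 1} ‖[a₁, a_k]‖`. Hermitian `h_j` enter as `a_j = -i h_j`.
-/

open NormedSpace Set

theorem Fin.sum_univ_sum_filter_lt_succ {M : Type*} [AddCommMonoid M] {n : ℕ}
    (f : Fin (n + 1) → Fin (n + 1) → M) :
    ∑ j, ∑ k ∈ Finset.univ.filter (fun k => j < k), f j k
      = ∑ k : Fin n, f 0 k.succ
        + ∑ j : Fin n, ∑ k ∈ Finset.univ.filter (fun k => j < k), f j.succ k.succ := by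
  simp only [Finset.sum_filter, Fin.sum_univ_succ, Fin.succ_pos, Fin.succ_lt_succ_iff,
    Fin.not_lt_zero, if_true, if_false, zero_add]

theorem norm_mul_sum_sub_sum_mul_le {R ι : Type*} [NormedRing R] (a : R) (s : Finset ι)
    (b : ι → R) : ‖a * ∑ i ∈ s, b i - (∑ i ∈ s, b i) * a‖ ≤ ∑ i ∈ s, ‖a * b i - b i * a‖ := by
  rw [Finset.mul_sum, Finset.sum_mul, ← Finset.sum_sub_distrib]
  exact norm_sum_le _ _

section CStarAlgebra

variable {A : Type*} [CStarAlgebra A]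

theorem exp_smul_mem_unitary {a : A} (ha : a ∈ skewAdjoint A) (t : ℝ) :
    exp (t • a) ∈ unitary A :=
  let +nondep : NormedAlgebra ℚ A := .restrictScalars ℚ ℝ A
  exp_mem_unitary_of_mem_skewAdjoint (skewAdjoint.smul_mem t ha)

theorem exp_smul_neg_mul_exp_smul (a : A) (t : ℝ) : exp (t • -a) * exp (t • a) = 1 := by
  let +nondep : NormedAlgebra ℚ A := .restrictScalars ℚ ℝ A
  rw [← exp_add_of_commute ((Commute.neg_left (.refl a)).smul_left t |>.smul_right t),
    ← smul_add, neg_add_cancel, smul_zero, exp_zero]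

theorem exp_smul_mul_exp_smul_neg (a : A) (t : ℝ) : exp (t • a) * exp (t • -a) = 1 := by
  simpa using exp_smul_neg_mul_exp_smul (-a) t

theorem commute_self_exp_smul (a : A) (t : ℝ) : Commute a (exp (t • a)) :=
  ((Commute.refl a).smul_right t).exp_right

theorem norm_exp_smul_mul_sub_mul_exp_smul_le {a : A} (ha : a ∈ skewAdjoint A) (b : A) (s : ℝ) :
    ‖exp (s • a) * b - b * exp (s • a)‖ ≤ |s| * ‖a * b - b * a‖ := by
  set k : ℝ → A := fun u => exp (u • a) * b * exp (u • -a)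
  have hk : ∀ u, HasDerivAt k (exp (u • a) * (a * b - b * a) * exp (u • -a)) u := by
    intro u
    refine (((hasDerivAt_exp_smul_const' a u).mul_const b).mul
      (hasDerivAt_exp_smul_const (-a) u)).congr_deriv ?_
    rw [(commute_self_exp_smul a u).eq, ← (commute_self_exp_smul (-a) u).eq]
    noncomm_ring
  have hk_norm : ∀ u, ‖exp (u • a) * (a * b - b * a) * exp (u • -a)‖ = ‖a * b - b * a‖ :=
    fun u => by
      rw [CStarRing.norm_mul_mem_unitary _ (exp_smul_mem_unitary (neg_mem ha) u),
        CStarRing.norm_mem_unitary_mul _ (exp_smul_mem_unitary ha u)]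
  have hk_lip : ‖k s - k 0‖ ≤ ‖a * b - b * a‖ * ‖s - 0‖ :=
    Convex.norm_image_sub_le_of_norm_hasDerivWithin_le (fun u _ => (hk u).hasDerivWithinAt)
      (fun u _ => (hk_norm u).le) convex_univ (mem_univ 0) (mem_univ s)
  have hk_conj : exp (s • a) * b - b * exp (s • a) = (k s - k 0) * exp (s • a) := by
    simp only [k, zero_smul, exp_zero, one_mul, mul_one, sub_mul, mul_assoc,
      exp_smul_neg_mul_exp_smul]
  rw [hk_conj, CStarRing.norm_mul_mem_unitary _ (exp_smul_mem_unitary ha s)]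
  simpa [mul_comm] using hk_lip

theorem norm_exp_smul_mul_exp_smul_sub_exp_smul_add_le_of_nonneg {a b : A}
    (ha : a ∈ skewAdjoint A) (hb : b ∈ skewAdjoint A) {t : ℝ} (ht : 0 ≤ t) :
    ‖exp (t • a) * exp (t • b) - exp (t • (a + b))‖ ≤ t ^ 2 / 2 * ‖a * b - b * a‖ := by
  set C := ‖a * b - b * a‖
  set F : ℝ → A := fun u => exp (u • -(a + b)) * (exp (u • a) * exp (u • b))
  set F' : ℝ → A := fun u =>
    exp (u • -(a + b)) * ((exp (u • a) * b - b * exp (u • a)) * exp (u • b))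
  have hF : ∀ u, HasDerivAt F (F' u) u := fun u =>
    ((hasDerivAt_exp_smul_const (-(a + b)) u).mul
      ((hasDerivAt_exp_smul_const' a u).mul (hasDerivAt_exp_smul_const' b u))).congr_deriv
      (by simp only [Pi.mul_apply, F']; noncomm_ring)
  have hF'_norm : ∀ u, ‖F' u‖ ≤ |u| * C := fun u => by
    rw [CStarRing.norm_mem_unitary_mul _ (exp_smul_mem_unitary (neg_mem (add_mem ha hb)) u),
      CStarRing.norm_mul_mem_unitary _ (exp_smul_mem_unitary hb u)]
    exact norm_exp_smul_mul_sub_mul_exp_smul_le ha b u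
  have hB : ∀ u : ℝ, HasDerivAt (fun u => u ^ 2 / 2 * C) (u * C) u := fun u => by
    simpa using ((hasDerivAt_pow 2 u).div_const 2).mul_const C
  have hF_sub : ‖F t - 1‖ ≤ t ^ 2 / 2 * C :=
    image_norm_le_of_norm_deriv_right_le_deriv_boundary (f := fun u => F u - 1)
      (fun u _ => ((hF u).sub_const 1).continuousAt.continuousWithinAt)
      (fun u _ => ((hF u).sub_const 1).hasDerivWithinAt) (by simp [F]) hB
      (fun u hu => (hF'_norm u).trans_eq (by rw [abs_of_nonneg hu.1])) ⟨ht, le_rfl⟩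
  have hF_conj : exp (t • a) * exp (t • b) - exp (t • (a + b))
      = exp (t • (a + b)) * (F t - 1) := by
    rw [mul_sub, ← mul_assoc, exp_smul_mul_exp_smul_neg, one_mul, mul_one]
  rwa [hF_conj, CStarRing.norm_mem_unitary_mul _ (exp_smul_mem_unitary (add_mem ha hb) t)]

theorem norm_exp_smul_mul_exp_smul_sub_exp_smul_add_le {a b : A}
    (ha : a ∈ skewAdjoint A) (hb : b ∈ skewAdjoint A) (t : ℝ) :
    ‖exp (t • a) * exp (t • b) - exp (t • (a + b))‖ ≤ t ^ 2 / 2 * ‖a * b - b * a‖ := by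
  rcases le_total 0 t with ht | ht
  · exact norm_exp_smul_mul_exp_smul_sub_exp_smul_add_le_of_nonneg ha hb ht
  · have := norm_exp_smul_mul_exp_smul_sub_exp_smul_add_le_of_nonneg (neg_mem ha) (neg_mem hb)
      (neg_nonneg.2 ht)
    simpa only [neg_smul_neg, ← neg_add, neg_sq, neg_mul_neg] using this

theorem norm_prod_ofFn_exp_smul_sub_exp_smul_sum_le {N : ℕ} (a : Fin N → A)
    (ha : ∀ j, a j ∈ skewAdjoint A) (t : ℝ) :
    ‖(List.ofFn fun j => exp (t • a j)).prod - exp (t • ∑ j, a j)‖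
      ≤ t ^ 2 / 2 * ∑ j, ∑ k ∈ Finset.univ.filter (fun k => j < k), ‖a j * a k - a k * a j‖ := by
  induction N with
  | zero => simp
  | succ N ih =>
    set P := (List.ofFn fun j : Fin N => exp (t • a j.succ)).prod
    set S := ∑ j : Fin N, a j.succ
    have hS : S ∈ skewAdjoint A := sum_mem fun j _ => ha j.succ
    have hsplit : (List.ofFn fun j => exp (t • a j)).prod - exp (t • ∑ j, a j)
        = exp (t • a 0) * (P - exp (t • S))
          + (exp (t • a 0) * exp (t • S) - exp (t • (a 0 + S))) := by
      rw [List.ofFn_succ, List.prod_cons, Fin.sum_univ_succ]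
      noncomm_ring
    rw [hsplit, Fin.sum_univ_sum_filter_lt_succ, mul_add, add_comm (t ^ 2 / 2 * _)]
    calc _ ≤ ‖P - exp (t • S)‖ + ‖exp (t • a 0) * exp (t • S) - exp (t • (a 0 + S))‖ := by
          grw [norm_add_le, CStarRing.norm_mem_unitary_mul _ (exp_smul_mem_unitary (ha 0) t)]
      _ ≤ _ := by
          gcongr
          · exact ih _ fun j => ha j.succ
          · grw [norm_exp_smul_mul_exp_smul_sub_exp_smul_add_le (ha 0) hS t,
              norm_mul_sum_sub_sum_mul_le]

end CStarAlgebra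

open scoped Matrix.Norms.L2Operator

theorem first_order_trotter_commutator_bound {d N : ℕ}
    (h : Fin N → Matrix (Fin d) (Fin d) ℂ)
    (hherm : ∀ l, (h l).IsHermitian)
    (H : Matrix (Fin d) (Fin d) ℂ) (hH : H = ∑ l, h l) (Δ : ℝ) :
    ‖(List.ofFn fun j => NormedSpace.exp ((-(Δ : ℂ) * Complex.I) • h j)).prod
        - NormedSpace.exp ((-(Δ : ℂ) * Complex.I) • H)‖
      ≤ Δ ^ 2 / 2 *
        ∑ j : Fin N, ∑ k ∈ Finset.univ.filter (fun k => j < k),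
          ‖h j * h k - h k * h j‖ := by
  have hskew : ∀ j, (-Complex.I) • h j ∈ skewAdjoint (Matrix (Fin d) (Fin d) ℂ) := fun j =>
    (hherm j).isSelfAdjoint.smul_mem_skewAdjoint (by simp [skewAdjoint.mem_iff])
  have hsmul : ∀ X : Matrix (Fin d) (Fin d) ℂ, (-(Δ : ℂ) * Complex.I) • X = Δ • (-Complex.I) • X :=
    fun X => by rw [← smul_assoc, Complex.real_smul]; ring_nf
  have hcomm : ∀ X Y : Matrix (Fin d) (Fin d) ℂ,
      ‖(-Complex.I) • X * (-Complex.I) • Y - (-Complex.I) • Y * (-Complex.I) • X‖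
        = ‖X * Y - Y * X‖ := fun X Y => by
    rw [smul_mul_smul_comm, smul_mul_smul_comm, ← smul_sub, norm_smul]; simp
  simpa only [hcomm, ← Finset.smul_sum, ← hH, ← hsmul] using
    norm_prod_ofFn_exp_smul_sub_exp_smul_sum_le (fun j => (-Complex.I) • h j) hskew Δ
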